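/- arXiv:2301.08976 — 2 statements merged into one kernel-verified Lean document; each statement's English description precedes it below -/
import Mathlib

section
/- Let G be a finite abelian group and let s be a positive integer coprime to exp(G). If g_1, g_2, ..., g_s is a sequence over G that does not contain a zero-sum subsequence of length r (where r is a positive multiple of exp(G)), then there exists x ∈ G such that the sequence g_1 + x, g_2 + x, ..., g_s + x is a zero-sum sequence that does not contain a zero-sum subsequence of length r. -/
/-- The generalized Erdős–Ginzburg–Ziv constant `s_r(G)`: the smallest integer `s`
such that every sequence (multiset) of `s` elements of `G` has a submultiset of
size `r` whose elements sum to zero. -/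
noncomputable def genEGZ (G : Type*) [AddCommGroup G] (r : ℕ) : ℕ :=
  sInf {s : ℕ | ∀ S : Multiset G, Multiset.card S = s →
    ∃ T ≤ S, Multiset.card T = r ∧ T.sum = 0}

/-- The modified Erdős–Ginzburg–Ziv constant `s'_r(G)`: the smallest integer `s`
such that every zero-sum multiset of `s` elements of `G` has a submultiset of
size `r` whose elements sum to zero. -/
noncomputable def modEGZ (G : Type*) [AddCommGroup G] (r : ℕ) : ℕ :=
  sInf {s : ℕ | ∀ S : Multiset G, Multiset.card S = s → S.sum = 0 →
    ∃ T ≤ S, Multiset.card T = r ∧ T.sum = 0}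
lemma aux_nsmul_zero {G : Type*} [AddCommGroup G] {r : ℕ}
    (hdvd : AddMonoid.exponent G ∣ r) (z : G) : r • z = 0 := by
  have h := AddMonoid.exponent_nsmul_eq_zero z
  obtain ⟨k, rfl⟩ := hdvd
  rw [mul_comm, mul_smul, h, smul_zero]

lemma aux_map_sum {G : Type*} [AddCommGroup G] (S : Multiset G) (x : G) :
    (S.map (· + x)).sum = S.sum + (Multiset.card S) • x := by
  induction S using Multiset.induction with
  | empty => simp
  | cons a S ih => simp [ih, succ_nsmul]; abel

theorem translate_of_no_zero_sum_subseq (G : Type*) [AddCommGroup G] [Fintype G]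
    (r s : ℕ) (hr : 0 < r) (hdvd : AddMonoid.exponent G ∣ r) (hs : 0 < s)
    (hcop : Nat.Coprime s (AddMonoid.exponent G))
    (S : Multiset G) (hcard : Multiset.card S = s)
    (hno : ¬ ∃ T ≤ S, Multiset.card T = r ∧ T.sum = 0) :
    ∃ x : G, (S.map (· + x)).sum = 0 ∧
      ¬ ∃ T ≤ S.map (· + x), Multiset.card T = r ∧ T.sum = 0 := by
  -- the map y ↦ s • y is injective, hence surjective
  have hinj : Function.Injective (fun y : G => s • y) := by
    have key : ∀ y : G, s • y = 0 → y = 0 := by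
      intro y hy
      have h1 : addOrderOf y ∣ s := addOrderOf_dvd_of_nsmul_eq_zero hy
      have h2 : addOrderOf y ∣ AddMonoid.exponent G := AddMonoid.addOrder_dvd_exponent y
      have : addOrderOf y ∣ 1 := hcop ▸ Nat.dvd_gcd h1 h2
      have := Nat.eq_one_of_dvd_one this
      exact AddMonoid.addOrderOf_eq_one_iff.mp this
    intro a b hab
    simp only at hab
    have : s • (a - b) = 0 := by rw [smul_sub, hab, sub_self]
    exact sub_eq_zero.mp (key _ this)
  have hsurj : Function.Surjective (fun y : G => s • y) :=
    Finite.surjective_of_injective hinj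
  obtain ⟨x, hx⟩ := hsurj (-S.sum)
  refine ⟨x, ?_, ?_⟩
  · simp only at hx
    rw [aux_map_sum, hcard, hx]; abel
  · rintro ⟨T, hT, hTcard, hTsum⟩
    apply hno
    refine ⟨T.map (fun y => y + (-x)), ?_, ?_, ?_⟩
    · have : ((S.map (· + x)).map (fun y => y + (-x))) = S := by
        rw [Multiset.map_map]
        simp
      calc T.map (fun y => y + (-x)) ≤ (S.map (· + x)).map (fun y => y + (-x)) :=
            Multiset.map_le_map hT
        _ = S := this
    · simpa using hTcard
    · rw [aux_map_sum, hTsum, hTcard, zero_add, aux_nsmul_zero hdvd]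
end

section
/- For every positive integer k, the multiset over Z_2^{2k} of length 4k consisting of 2k − 1 copies of the zero vector, the 2k standard basis vectors e_1, ..., e_{2k}, and the vector e_1 + e_2 + ... + e_{2k}, is a zero-sum sequence that contains no zero-sum subsequence of length 2k. -/
/-!
A subsequence of this sequence consists of some zeros, the basis vectors `e j` for `j` in some
set `t`, and possibly the all-ones vector. Read coordinatewise, its sum vanishes only if either
the all-ones vector is absent and `t = ∅`, leaving at most `2k - 1` terms, or it is present and
`t` is everything, giving at least `2k + 1` terms.
-/

namespace Multiset

variable {α β : Type*}

lemma exists_eq_add_of_le_add {s t u : Multiset α} (h : s ≤ t + u) :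
    ∃ s₁ ≤ t, ∃ s₂ ≤ u, s = s₁ + s₂ := by
  classical
  refine ⟨s ∩ t, inter_le_right, s - t, ?_, ?_⟩
  · rwa [Multiset.sub_le_iff_le_add']
  · ext a
    have := le_iff_count.mp h a
    simp only [count_add, count_inter, count_sub] at *
    omega

lemma exists_eq_map_of_le_map {f : α → β} {s : Multiset α} {t : Multiset β} (h : t ≤ s.map f) :
    ∃ u ≤ s, t = u.map f := by
  induction s using Quotient.inductionOn
  induction t using Quotient.inductionOn
  obtain ⟨l, hperm, hsub⟩ := h
  obtain ⟨l', hl', rfl⟩ := List.sublist_map_iff.1 hsub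
  exact ⟨l', hl'.subperm, (Quotient.sound hperm).symm⟩

end Multiset

section BasisVectors

variable {ι R : Type*} [DecidableEq ι] [Semiring R]

lemma sum_pi_single_one_eq_zero_iff [Nontrivial R] {s : Finset ι} :
    ∑ j ∈ s, Pi.single j (1 : R) = 0 ↔ s = ∅ := by
  refine ⟨fun h => Finset.eq_empty_of_forall_notMem fun i hi => ?_, fun h => h ▸ Finset.sum_empty⟩
  have hi' := congrFun h i
  rw [Finset.sum_apply, Finset.sum_pi_single, if_pos hi] at hi'
  exact one_ne_zero hi'

lemma sum_pi_single_one_add_sum_univ_eq_zero_iff [Fintype ι] [CharP R 2] {s : Finset ι} :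
    ∑ j ∈ s, Pi.single j (1 : R) + ∑ j, Pi.single j 1 = 0 ↔ s = Finset.univ := by
  have : Nontrivial R := CharP.nontrivial_of_char_ne_one (by decide : 2 ≠ 1)
  have add_self (x : ι → R) : x + x = 0 := funext fun i => CharTwo.add_self_eq_zero (x i)
  rw [← Finset.sum_add_sum_compl s, ← add_assoc, add_self, zero_add,
    sum_pi_single_one_eq_zero_iff, Finset.compl_eq_empty_iff]

end BasisVectors

open Multiset in
lemma card_ne_card_of_le_of_sum_eq_zero {ι R : Type*} [Fintype ι] [Nonempty ι] [DecidableEq ι]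
    [Semiring R] [CharP R 2] {T : Multiset (ι → R)}
    (hT : T ≤ replicate (Fintype.card ι - 1) 0 + Finset.univ.val.map (fun j => Pi.single j 1)
      + {∑ j, Pi.single j 1}) (hsum : T.sum = 0) :
    card T ≠ Fintype.card ι := by
  obtain ⟨T', hT', T₂, hT₂, rfl⟩ := exists_eq_add_of_le_add hT
  obtain ⟨T₀, hT₀, T₁, hT₁, rfl⟩ := exists_eq_add_of_le_add hT'
  obtain ⟨a, ha, rfl⟩ := le_replicate_iff.1 hT₀
  obtain ⟨u, hu, rfl⟩ := exists_eq_map_of_le_map hT₁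
  set t : Finset ι := ⟨u, nodup_of_le hu Finset.univ.nodup⟩
  have hcard_t : card u = t.card := rfl
  have hsum_t : (u.map fun j => Pi.single j (1 : R)).sum = ∑ j ∈ t, Pi.single j 1 := rfl
  have hpos := Fintype.card_pos (α := ι)
  have : Nontrivial R := CharP.nontrivial_of_char_ne_one (by decide : 2 ≠ 1)
  rcases le_singleton.1 hT₂ with rfl | rfl
  · rw [sum_add, sum_add, Multiset.sum_zero, add_zero, sum_replicate, smul_zero, zero_add, hsum_t,
      sum_pi_single_one_eq_zero_iff] at hsum
    rw [card_add, card_add, card_zero, card_replicate, card_map, hcard_t, hsum, Finset.card_empty]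
    omega
  · rw [sum_add, sum_add, sum_singleton, sum_replicate, smul_zero, zero_add, hsum_t,
      sum_pi_single_one_add_sum_univ_eq_zero_iff] at hsum
    rw [card_add, card_add, card_singleton, card_replicate, card_map, hcard_t, hsum,
      Finset.card_univ]
    omega

theorem construction_d_eq_two_k (k : ℕ) (hk : 0 < k) :
    let e : Fin (2 * k) → (Fin (2 * k) → ZMod 2) := fun j => Pi.single j 1
    let S : Multiset (Fin (2 * k) → ZMod 2) :=
      Multiset.replicate (2 * k - 1) 0 + Multiset.map e Finset.univ.val
        + {∑ j, e j}
    Multiset.card S = 4 * k ∧ S.sum = 0 ∧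
      ¬ ∃ T ≤ S, Multiset.card T = 2 * k ∧ T.sum = 0 := by
  intro e S
  have : NeZero (2 * k) := ⟨by omega⟩
  refine ⟨?_, ?_, ?_⟩
  · simp only [S, Multiset.card_add, Multiset.card_replicate, Multiset.card_map,
      Multiset.card_singleton, Finset.card_val, Finset.card_univ, Fintype.card_fin]
    omega
  · simp only [S, Multiset.sum_add, Multiset.sum_replicate, smul_zero, zero_add,
      Multiset.sum_singleton]
    exact CharTwo.add_self_eq_zero _
  · rintro ⟨T, hTS, hcard, hsum⟩
    refine card_ne_card_of_le_of_sum_eq_zero ?_ hsum (hcard.trans (Fintype.card_fin _).symm)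
    rwa [Fintype.card_fin]
end
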